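/- arXiv:2308.13438 — 2 statements merged into one kernel-verified Lean document; each statement's English description precedes it below -/
import Mathlib

section
/- Let μ, ν, β, ω̄ > 0, Ḡ, T̄ ≥ 0 and k ≥ 0. For t ∈ ℝ define the real 3×3 matrix M(t) with rows (−βT̄ − k, μ, ν − βḠt), (βT̄, −μ − ω̄ − k, βḠt) and (0, ω̄, −ν − k). If M(1) is Hurwitz stable, then M(t) is Hurwitz stable for every t ≤ 1. -/
/-- A real square matrix is Hurwitz stable if every complex root of its
characteristic polynomial has strictly negative real part. -/
def HurwitzStable {n : ℕ} (M : Matrix (Fin n) (Fin n) ℝ) : Prop :=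
  ∀ z : ℂ, Polynomial.aeval z M.charpoly = 0 → z.re < 0

/-- The grass–sapling–savanna block of the linearization of the spatial
Staver–Levin model. -/
def slBlock (μ ν β ω G T k t : ℝ) : Matrix (Fin 3) (Fin 3) ℝ :=
  !![-β * T - k, μ, ν - β * G * t;
     β * T, -μ - ω - k, β * G * t;
     0, ω, -ν - k]

open Polynomial Matrix in
/-- A monic quadratic with positive real coefficients has all roots in the
open left half plane. -/
lemma quad_root_neg {b c : ℝ} (hb : 0 < b) (hc : 0 < c) (z : ℂ)
    (h : z ^ 2 + (b : ℂ) * z + (c : ℂ) = 0) : z.re < 0 := by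
  by_contra hx
  push_neg at hx
  have hre : z.re ^ 2 - z.im ^ 2 + b * z.re + c = 0 := by
    have := congrArg Complex.re h
    simpa [Complex.add_re, Complex.mul_re, sq, Complex.ofReal_re, Complex.ofReal_im] using this
  have him : 2 * z.re * z.im + b * z.im = 0 := by
    have := congrArg Complex.im h
    simp [Complex.add_im, Complex.mul_im, sq, Complex.ofReal_re, Complex.ofReal_im] at this
    linarith
  have h2 : 2 * z.re * z.im ^ 2 + b * z.im ^ 2 = 0 := by
    have := congrArg (· * z.im) him; simp at this; nlinarith [this]
  have hy2 : z.im ^ 2 = 0 := by nlinarith [mul_nonneg hx (sq_nonneg z.im)]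
  nlinarith

lemma cubic_root_neg {b c k : ℝ} (hb : 0 < b) (hk : 0 < k) (hc : 0 < c) (z : ℂ)
    (hz : (z + (k : ℂ)) * (z ^ 2 + (b : ℂ) * z + (c : ℂ)) = 0) : z.re < 0 := by
  rcases mul_eq_zero.1 hz with h | h
  · have : z = -(k : ℂ) := by linear_combination h
    rw [this]; simpa using hk
  · exact quad_root_neg hb hc z h

lemma cubic_stable_pos {b c k : ℝ} (hb : 0 < b)
    (h : ∀ z : ℂ, (z + (k : ℂ)) * (z ^ 2 + (b : ℂ) * z + (c : ℂ)) = 0 → z.re < 0) :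
    0 < k ∧ 0 < c := by
  have hk : 0 < k := by
    have := h (-(k : ℂ)) (by ring); simpa using this
  refine ⟨hk, ?_⟩
  by_contra hc
  push_neg at hc
  have hdisc : (0:ℝ) ≤ b ^ 2 - 4 * c := by nlinarith
  set s : ℝ := Real.sqrt (b ^ 2 - 4 * c) with hs
  have hs2 : s ^ 2 = b ^ 2 - 4 * c := Real.sq_sqrt hdisc
  have hsb : b ≤ s := by
    have : Real.sqrt (b ^ 2) ≤ s := Real.sqrt_le_sqrt (by nlinarith)
    rwa [Real.sqrt_sq hb.le] at this
  set x : ℝ := (-b + s) / 2 with hx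
  have hxnn : 0 ≤ x := by rw [hx]; linarith
  have hroot : x ^ 2 + b * x + c = 0 := by rw [hx]; nlinarith [hs2]
  have h0 : ((x : ℂ)) ^ 2 + (b : ℂ) * (x : ℂ) + (c : ℂ) = 0 := by
    exact_mod_cast congrArg (fun r : ℝ => (r : ℂ)) hroot
  have := h (x : ℂ) (by rw [h0, mul_zero])
  simp at this
  linarith

open Polynomial Matrix in
/-- Explicit factorization of the characteristic polynomial of `slBlock`:
the row vector (1,1,1) is a left eigenvector with eigenvalue `-k`. -/
lemma slBlock_charpoly (μ ν β ω G T k t : ℝ) (z : ℂ) :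
    Polynomial.aeval z (slBlock μ ν β ω G T k t).charpoly =
      (z + k) * (z ^ 2 + ((β*T + μ + ω + ν + 2*k : ℝ) : ℂ) * z +
        (((β*T+k)*(μ+ω+k) - μ*(β*T) + (β*T+k)*(ν+k) + (μ+ω+k)*(ν+k) - β*G*ω*t
          - k*(β*T + μ + ω + ν + 2*k) : ℝ) : ℂ)) := by
  simp [Matrix.charpoly, Matrix.det_fin_three, charmatrix_apply, slBlock, Matrix.one_apply]
  ring

theorem stmt_4 (μ ν β ω G T k : ℝ)
    (hμ : 0 < μ) (hν : 0 < ν) (hβ : 0 < β) (hω : 0 < ω)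
    (hG : 0 ≤ G) (hT : 0 ≤ T) (hk : 0 ≤ k)
    (h1 : HurwitzStable (slBlock μ ν β ω G T k 1)) :
    ∀ t : ℝ, t ≤ 1 → HurwitzStable (slBlock μ ν β ω G T k t) := by
  have hb : (0:ℝ) < β*T + μ + ω + ν + 2*k := by positivity
  obtain ⟨hkpos, hc1⟩ := cubic_stable_pos hb
    (fun z hz => h1 z (by rw [slBlock_charpoly]; exact hz))
  intro t ht z hz
  rw [slBlock_charpoly] at hz
  refine cubic_root_neg hb hkpos ?_ z hz
  nlinarith [hc1, mul_nonneg (mul_nonneg (mul_nonneg hβ.le hG) hω.le)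
    (sub_nonneg.2 ht)]
end

section
/- Let μ, ν, α, β > 0, ω̄ > 0, φ̄ > 0 and Ḡ, S̄, T̄, F̄ ≥ 0 with Ḡ + S̄ + T̄ + F̄ = 1. For jT, jF ∈ ℝ define the real 4×4 matrix A(jT, jF) with rows (−αF̄ − βT̄, μ, ν − βḠ·jT, φ̄ − αḠ·jF), (βT̄, −μ − αF̄ − ω̄, βḠ·jT, −αS̄·jF), (0, ω̄, −ν − αF̄, −αT̄·jF) and (0, 0, 0, α(1−F̄)·jF − αF̄ − φ̄). If A(1,1) is Hurwitz stable, then A(jT, jF) is Hurwitz stable for all jT ≤ 1 and jF ≤ 1. -/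
/-- The linearization of the spatially extended Staver–Levin model about a
homogeneous equilibrium, at Fourier-transform values `jT`, `jF` of the
savanna and forest seed-dispersal kernels. -/
def slMatrix (μ ν α β ω φ G S T F jT jF : ℝ) : Matrix (Fin 4) (Fin 4) ℝ :=
  !![-α * F - β * T, μ, ν - β * G * jT, φ - α * G * jF;
     β * T, -μ - α * F - ω, β * G * jT, -α * S * jF;
     0, ω, -ν - α * F, -α * T * jF;
     0, 0, 0, α * (1 - F) * jF - α * F - φ]

open Polynomial

open Complex in
theorem quadratic_roots_re_neg_iff {P Q : ℝ} :
    (∀ z : ℂ, z ^ 2 + P * z + Q = 0 → z.re < 0) ↔ 0 < P ∧ 0 < Q := by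
  constructor
  · intro h
    obtain ⟨s, hs⟩ := IsAlgClosed.exists_eq_mul_self ((P : ℂ) ^ 2 - 4 * Q)
    have h₁ := h ((-P + s) / 2) (by linear_combination -hs / 4)
    have h₂ := h ((-P - s) / 2) (by linear_combination -hs / 4)
    -- `h₁`, `h₂` give `|s.re| < P`; the roots multiply to `Q = (P² - s.re² + s.im²) / 4`
    have hprod : (-P + s) / 2 * ((-P - s) / 2) = (Q : ℂ) := by linear_combination hs / 4
    have hQ := congrArg Complex.re hprod
    simp only [div_ofNat_re, div_ofNat_im, add_re, sub_re, add_im, sub_im, neg_re, neg_im,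
      ofReal_re, ofReal_im, mul_re] at h₁ h₂ hQ
    have hP : 0 < P := by linarith
    refine ⟨hP, ?_⟩
    nlinarith [mul_pos (by linarith : 0 < P - s.re) (by linarith : 0 < P + s.re), sq_nonneg s.im]
  · rintro ⟨hP, hQ⟩ z hz
    have hre := congrArg Complex.re hz
    have him := congrArg Complex.im hz
    simp only [pow_two, add_re, add_im, mul_re, mul_im, ofReal_re, ofReal_im, zero_re,
      zero_im] at hre him
    have him' : z.im * (2 * z.re + P) = 0 := by linear_combination him
    rcases mul_eq_zero.mp him' with h | h
    · rw [h] at hre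
      nlinarith
    · linarith

theorem hurwitzStable_iff_of_charpoly_eq {n : ℕ} {M : Matrix (Fin n) (Fin n) ℝ} {a b P Q : ℝ}
    (hM : M.charpoly = (X - C a) * (X - C b) * (X ^ 2 + C P * X + C Q)) :
    HurwitzStable M ↔ a < 0 ∧ b < 0 ∧ 0 < P ∧ 0 < Q := by
  simp only [HurwitzStable, hM, map_mul, map_sub, map_add, map_pow, aeval_X, aeval_C,
    Complex.coe_algebraMap, mul_eq_zero, sub_eq_zero, or_imp, forall_and, forall_eq,
    Complex.ofReal_re, quadratic_roots_re_neg_iff, and_assoc]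

theorem charpoly_slMatrix (μ ν α β ω φ G S T F jT jF : ℝ) :
    (slMatrix μ ν α β ω φ G S T F jT jF).charpoly =
      (X - C (α * (1 - F) * jF - α * F - φ)) * (X - C (-(α * F))) *
        (X ^ 2 + C (2 * α * F + β * T + μ + ω + ν) * X +
          C (α * F * (α * F + β * T + μ + ω + ν) + β * T * (ω + ν) + ν * (μ + ω)
            - ω * β * G * jT)) := by
  rw [Matrix.charpoly, Matrix.det_succ_row _ (Fin.last 3)]
  simp only [Nat.succ_eq_add_one, Nat.reduceAdd, Fin.reduceLast, Fin.coe_ofNat_eq_mod,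
    Nat.mod_succ, slMatrix, neg_mul, Matrix.charmatrix_apply, Fin.isValue, Matrix.of_apply,
    Matrix.cons_val', Matrix.cons_val_fin_one, Matrix.cons_val, Matrix.cons_val_one,
    Matrix.det_fin_three, Matrix.submatrix_apply, Fin.succAbove, Fin.castSucc_zero, Fin.reduceLT,
    ↓reduceIte, Fin.succ_zero_eq_one, Matrix.cons_val_zero, Fin.castSucc_one, Fin.succ_one_eq_two,
    Fin.reduceCastSucc, Fin.reduceSucc, Fin.sum_univ_four, Nat.zero_mod, add_zero, ne_eq,
    Fin.reduceEq, not_false_eq_true, Matrix.diagonal_apply_ne, map_zero, sub_self, mul_zero,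
    lt_self_iff_false, zero_ne_one, zero_sub, not_lt_zero, map_mul, mul_neg, neg_neg, map_neg,
    sub_neg_eq_add, zero_add, Matrix.diagonal_apply_eq, map_sub, neg_sub, zero_mul, Nat.one_mod,
    zero_lt_one, Fin.lt_one_iff, one_ne_zero, sub_zero, Nat.reduceMod, map_one, map_add, C_ofNat]
  ring

theorem stmt_5_general (μ ν α β ω φ G S T F : ℝ)
    (hα : 0 < α) (hβ : 0 < β)
    (hω : 0 < ω)
    (hG : 0 ≤ G) (hS : 0 ≤ S) (hT : 0 ≤ T)
    (hsum : G + S + T + F = 1)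
    (h1 : HurwitzStable (slMatrix μ ν α β ω φ G S T F 1 1)) :
    ∀ jT jF : ℝ, jT ≤ 1 → jF ≤ 1 →
      HurwitzStable (slMatrix μ ν α β ω φ G S T F jT jF) := by
  intro jT jF hjT hjF
  rw [hurwitzStable_iff_of_charpoly_eq (charpoly_slMatrix ..)] at h1 ⊢
  obtain ⟨hd, hαF, hP, hQ⟩ := h1
  have h1F : 0 ≤ 1 - F := by linarith
  refine ⟨?_, hαF, hP, ?_⟩
  · linarith [mul_nonneg (mul_nonneg hα.le h1F) (sub_nonneg.mpr hjF)]
  · linarith [mul_nonneg (mul_nonneg hω.le hβ.le) (mul_nonneg hG (sub_nonneg.mpr hjT))]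

theorem stmt_5 (μ ν α β ω φ G S T F : ℝ)
    (hμ : 0 < μ) (hν : 0 < ν) (hα : 0 < α) (hβ : 0 < β)
    (hω : 0 < ω) (hφ : 0 < φ)
    (hG : 0 ≤ G) (hS : 0 ≤ S) (hT : 0 ≤ T) (hF : 0 ≤ F)
    (hsum : G + S + T + F = 1)
    (h1 : HurwitzStable (slMatrix μ ν α β ω φ G S T F 1 1)) :
    ∀ jT jF : ℝ, jT ≤ 1 → jF ≤ 1 →
      HurwitzStable (slMatrix μ ν α β ω φ G S T F jT jF) :=
  stmt_5_general μ ν α β ω φ G S T F hα hβ hω hG hS hT hsum h1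
end
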